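/- arXiv:1402.1337 — 2 statements merged into one kernel-verified Lean document; each statement's English description precedes it below -/
import Mathlib

section
/- For any sequence of positive integers a_2,a_3,...,a_d (d ≥ 2), K(a_d,...,a_3,2a_2+1,a_3,...,a_d) = (m-n)(m+n) = m² - n², where m = K(1,a_2,a_3,...,a_d) and n = K(a_2,a_3,...,a_d). -/
def contK : List ℕ → ℕ
  | [] => 1
  | [a] => a
  | a :: b :: l => a * contK (b :: l) + contK l

lemma contK_append (x : List ℕ) (b a : ℕ) (y : List ℕ) :
    contK (x ++ b :: a :: y) = contK (x ++ [b]) * contK (a :: y) + contK x * contK y := by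
  match x with
  | [] => simp [contK]
  | [c] => simp [contK]; ring
  | c :: d :: l =>
    have h1 := contK_append (d :: l) b a y
    have h2 := contK_append l b a y
    simp only [List.cons_append, contK, List.append_eq] at *
    rw [h1, h2]; ring
termination_by x.length

lemma contK_concat (x : List ℕ) (c b : ℕ) :
    contK (x ++ [c] ++ [b]) = b * contK (x ++ [c]) + contK x := by
  match x with
  | [] => simp [contK]; ring
  | [e] => simp [contK]; ring
  | e :: d :: l =>
    have h1 := contK_concat (d :: l) c b
    have h2 := contK_concat l c b
    simp only [List.cons_append, contK, List.append_eq] at *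
    rw [h1, h2]; ring
termination_by x.length

lemma contK_reverse (l : List ℕ) : contK l.reverse = contK l := by
  match l with
  | [] => rfl
  | [a] => rfl
  | a :: b :: t =>
    have h1 := contK_reverse (b :: t)
    have h2 := contK_reverse t
    have : (a :: b :: t).reverse = (t.reverse ++ [b]) ++ [a] := by simp
    rw [this, contK_concat, show t.reverse ++ [b] = (b :: t).reverse by simp, h1, h2]
    rfl
termination_by l.length

theorem continuant_palindrome_odd_center (a₂ : ℕ) (ha₂ : 0 < a₂) (r : List ℕ)
    (hr : ∀ x ∈ r, 0 < x) :
    contK (r.reverse ++ (2 * a₂ + 1) :: r) =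
      (contK (1 :: a₂ :: r) - contK (a₂ :: r)) *
        (contK (1 :: a₂ :: r) + contK (a₂ :: r)) ∧
    contK (r.reverse ++ (2 * a₂ + 1) :: r) =
      contK (1 :: a₂ :: r) ^ 2 - contK (a₂ :: r) ^ 2 := by
  match r with
  | [] =>
    refine ⟨?_, ?_⟩ <;> simp [contK] <;> ring_nf <;> omega
  | h :: t =>
    set p := contK (h :: t) with hp
    set q := contK t with hq
    have hrev : contK ((h :: t).reverse ++ [2 * a₂ + 1] ++ [h] ++ t)
        = contK (h :: t) * contK ((2 * a₂ + 1) :: h :: t) + contK t * contK (h :: t) := by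
      have : (h :: t).reverse ++ [2 * a₂ + 1] ++ [h] ++ t
          = t.reverse ++ h :: (2 * a₂ + 1) :: h :: t := by simp
      rw [this, contK_append t.reverse h (2 * a₂ + 1) (h :: t),
        show t.reverse ++ [h] = (h :: t).reverse by simp, contK_reverse, contK_reverse]
    have hL : contK ((h :: t).reverse ++ (2 * a₂ + 1) :: h :: t)
        = p * ((2 * a₂ + 1) * p + q) + q * p := by
      have e : (h :: t).reverse ++ (2 * a₂ + 1) :: h :: t
          = (h :: t).reverse ++ [2 * a₂ + 1] ++ [h] ++ t := by simp
      rw [e, hrev]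
      have : contK ((2 * a₂ + 1) :: h :: t) = (2 * a₂ + 1) * p + q := rfl
      rw [this]
    have hm : contK (1 :: a₂ :: h :: t) = a₂ * p + q + p := by
      show 1 * contK (a₂ :: h :: t) + contK (h :: t) = _
      show 1 * (a₂ * contK (h :: t) + contK t) + contK (h :: t) = _
      ring
    have hn : contK (a₂ :: h :: t) = a₂ * p + q := rfl
    rw [hL, hm, hn]
    constructor
    · have : a₂ * p + q + p - (a₂ * p + q) = p := by omega
      rw [this]; ring
    · have hsq : (a₂ * p + q + p) ^ 2 = (a₂ * p + q) ^ 2 + (p * ((2 * a₂ + 1) * p + q) + q * p) := by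
        ring
      omega
end

section
/- Suppose positive integers a_1,...,a_d and b_1,...,b_e with d ≥ e ≥ 2 satisfy K(a_1,...,a_d) = K(b_1,...,b_e) and K(a_2,...,a_d) = K(b_2,...,b_e). Then a_i = b_i for i = 1,...,e-1. -/
/-!
Writing `a = a₁ :: a'`, the recursion `K(a) = a₁ K(a') + K(a'.tail)` with `1 ≤ K(a'.tail) ≤ K(a')`
is a Euclidean division of `K(a) - 1` by `K(a')`, with quotient `a₁` and remainder `K(a'.tail) - 1`.
So `K(a)` and `K(a')` determine `a₁` and `K(a'.tail)`, and the claim follows by peeling off one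
entry at a time.
-/

theorem contK_pos {l : List ℕ} (h : ∀ x ∈ l, 0 < x) : 0 < contK l := by
  match l with
  | [] => simp [contK]
  | [a] => simpa [contK] using h
  | a :: b :: m =>
    have : 0 < contK m := contK_pos fun x hx => h x (by simp [hx])
    simp only [contK]
    positivity

theorem contK_cons (x : ℕ) {l : List ℕ} (hl : l ≠ []) :
    contK (x :: l) = x * contK l + contK l.tail := by
  match l with
  | b :: m => rfl

theorem contK_tail_le {l : List ℕ} (h : ∀ x ∈ l, 0 < x) : contK l.tail ≤ contK l := by
  match l with
  | [] => exact le_rfl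
  | [a] => exact h a (List.mem_singleton_self a)
  | a :: b :: m =>
    have ha : 1 ≤ a := h a (by simp)
    simp only [contK, List.tail_cons]
    nlinarith

theorem Nat.eq_and_eq_of_mul_add_eq_mul_add {q₁ q₂ r₁ r₂ k : ℕ}
    (hr₁ : 0 < r₁) (hr₁k : r₁ ≤ k) (hr₂ : 0 < r₂) (hr₂k : r₂ ≤ k)
    (h : q₁ * k + r₁ = q₂ * k + r₂) : q₁ = q₂ ∧ r₁ = r₂ := by
  have hk : 0 < k := hr₁.trans_le hr₁k
  -- shift the remainders from `[1, k]` to `[0, k)`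
  have h' : r₁ - 1 + k * q₁ = r₂ - 1 + k * q₂ := by rw [mul_comm k, mul_comm k]; omega
  have h₁ := (Nat.div_mod_unique (d := q₁) hk).2 ⟨rfl, (by omega : r₁ - 1 < k)⟩
  have h₂ := (Nat.div_mod_unique (d := q₂) hk).2 ⟨rfl, (by omega : r₂ - 1 < k)⟩
  rw [h'] at h₁
  omega

theorem eq_and_contK_tail_eq_of_contK_cons_eq {x y : ℕ} {l m : List ℕ}
    (hl : ∀ z ∈ l, 0 < z) (hm : ∀ z ∈ m, 0 < z) (hl₀ : l ≠ []) (hm₀ : m ≠ [])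
    (h : contK (x :: l) = contK (y :: m)) (h' : contK l = contK m) :
    x = y ∧ contK l.tail = contK m.tail := by
  rw [contK_cons x hl₀, contK_cons y hm₀, h'] at h
  refine Nat.eq_and_eq_of_mul_add_eq_mul_add (contK_pos ?_) (h' ▸ contK_tail_le hl)
    (contK_pos ?_) (contK_tail_le hm) h
  · exact fun z hz => hl z (List.mem_of_mem_tail hz)
  · exact fun z hz => hm z (List.mem_of_mem_tail hz)

theorem continuant_prefix_unique_general (a b : List ℕ)
    (hapos : ∀ x ∈ a, 0 < x) (hbpos : ∀ x ∈ b, 0 < x)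
    (hba : b.length ≤ a.length)
    (h1 : contK a = contK b) (h2 : contK a.tail = contK b.tail) :
    a.take (b.length - 1) = b.take (b.length - 1) := by
  induction b generalizing a with
  | nil => rfl
  | cons y m ih =>
    rcases m with _ | ⟨v, m⟩
    · rfl
    obtain ⟨x, w, l, rfl⟩ : ∃ x w l, a = x :: w :: l := by
      match a, hba with
      | x :: w :: l, _ => exact ⟨x, w, l, rfl⟩
    have hl : ∀ z ∈ w :: l, 0 < z := fun z hz => hapos z (List.mem_cons_of_mem x hz)
    have hm : ∀ z ∈ v :: m, 0 < z := fun z hz => hbpos z (List.mem_cons_of_mem y hz)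
    obtain ⟨rfl, htail⟩ := eq_and_contK_tail_eq_of_contK_cons_eq hl hm
      (List.cons_ne_nil _ _) (List.cons_ne_nil _ _) h1 h2
    simpa using ih (w :: l) hl hm (by simpa using hba) h2 htail

theorem continuant_prefix_unique (a b : List ℕ)
    (hapos : ∀ x ∈ a, 0 < x) (hbpos : ∀ x ∈ b, 0 < x)
    (hb2 : 2 ≤ b.length) (hba : b.length ≤ a.length)
    (h1 : contK a = contK b) (h2 : contK a.tail = contK b.tail) :
    a.take (b.length - 1) = b.take (b.length - 1) :=
  continuant_prefix_unique_general a b hapos hbpos hba h1 h2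
end
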